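/- Let V be a finite type and let Γ be a connected circuit-Eulerian multidigraph on V with edge multiset E. Let b ≠ e be two vertices of V, let k ≥ 1, and let Π be a list of k pairwise distinct directed edges forming a directed walk from b to e, such that each entry of Π has multiplicity 0 in E. Then the multidigraph on V with edge multiset E + ↑Π (the multiset sum of E and the entries of Π) is path-Eulerian. -/

import Mathlib

/-! The walk `Π` starts at `b ≠ e`, so by connectivity `b` lies on an edge of `E`. On a closed
walk every head is also a tail, so `b` is the tail of an edge of an Eulerian dicircuit of `E`;
rotating that dicircuit to start there and then following `Π` is an Eulerian dipath from `b`
to `e`. -/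

/-- A directed walk from `x` to `y` in the multidigraph with edge multiset `E`:
a nonempty list of edges, each an element of `E`, consecutively linked
(head of each edge equals tail of the next), starting at `x` and ending at `y`. -/
def IsDiwalk {V : Type*} (E : Multiset (V × V)) (x y : V) (L : List (V × V)) : Prop :=
  L ≠ [] ∧ (∀ e ∈ L, e ∈ E) ∧ L.Chain' (fun e f => e.2 = f.1) ∧
    L.head?.map Prod.fst = some x ∧ L.getLast?.map Prod.snd = some y

/-- An Eulerian dicircuit: a directed trail from some vertex back to itself whose
multiset of entries equals the full edge multiset. -/
def CircuitEulerian {V : Type*} (E : Multiset (V × V)) : Prop :=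
  ∃ (v : V) (L : List (V × V)), IsDiwalk E v v L ∧ (L : Multiset (V × V)) = E

/-- An Eulerian dipath: a directed trail between two distinct vertices whose
multiset of entries equals the full edge multiset. -/
def PathEulerian {V : Type*} (E : Multiset (V × V)) : Prop :=
  ∃ (x y : V), x ≠ y ∧ ∃ L : List (V × V), IsDiwalk E x y L ∧ (L : Multiset (V × V)) = E

/-- Strong connectedness: between every two distinct vertices there are directed
walks both ways. -/
def StronglyConnected {V : Type*} (E : Multiset (V × V)) : Prop :=
  ∀ x y : V, x ≠ y → (∃ L, IsDiwalk E x y L) ∧ (∃ L, IsDiwalk E y x L)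

/-- Connectedness: every two distinct vertices are joined by a walk in which each
edge of `E` may be traversed in either direction. -/
def UndirConnected {V : Type*} (E : Multiset (V × V)) : Prop :=
  ∀ x y : V, x ≠ y → Relation.ReflTransGen (fun a b => (a, b) ∈ E ∨ (b, a) ∈ E) x y

/-- Out-degree: the number of edges (with multiplicity) whose tailpoint is `x`. -/
def outDeg {V : Type*} [DecidableEq V] (E : Multiset (V × V)) (x : V) : ℕ :=
  Multiset.countP (fun e => e.1 = x) E

/-- In-degree: the number of edges (with multiplicity) whose headpoint is `x`. -/
def inDeg {V : Type*} [DecidableEq V] (E : Multiset (V × V)) (x : V) : ℕ :=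
  Multiset.countP (fun e => e.2 = x) E

namespace IsDiwalk

variable {V : Type*} {E F : Multiset (V × V)} {x y z : V} {L M : List (V × V)}

theorem mono (h : IsDiwalk E x y L) (hEF : E ⊆ F) : IsDiwalk F x y L :=
  ⟨h.1, fun d hd => hEF (h.2.1 d hd), h.2.2⟩

theorem append (hL : IsDiwalk E x y L) (hM : IsDiwalk E y z M) : IsDiwalk E x z (L ++ M) := by
  obtain ⟨hLne, hLmem, hLchain, hLhead, hLlast⟩ := hL
  obtain ⟨hMne, hMmem, hMchain, hMhead, hMlast⟩ := hM
  refine ⟨by simp [hLne], fun d hd => ?_, hLchain.append hMchain fun a ha c hc => ?_, ?_, ?_⟩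
  · rcases List.mem_append.mp hd with hd | hd
    exacts [hLmem d hd, hMmem d hd]
  · rw [Option.mem_def.mp ha, Option.map_some, Option.some_inj] at hLlast
    rw [Option.mem_def.mp hc, Option.map_some, Option.some_inj] at hMhead
    rw [hLlast, hMhead]
  · rwa [List.head?_append_of_ne_nil _ hLne]
  · rwa [List.getLast?_append_of_ne_nil _ hMne]

theorem of_append (h : IsDiwalk E x z (L ++ M)) (hL : L ≠ []) (hM : M ≠ []) :
    ∃ y, IsDiwalk E x y L ∧ IsDiwalk E y z M := by
  obtain ⟨-, hmem, hchain, hhead, hlast⟩ := h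
  refine ⟨(M.head hM).1, ⟨hL, fun d hd => hmem d (by simp [hd]), hchain.left_of_append, ?_, ?_⟩,
    ⟨hM, fun d hd => hmem d (by simp [hd]), hchain.right_of_append, ?_, ?_⟩⟩
  · rwa [List.head?_append_of_ne_nil _ hL] at hhead
  · rw [List.getLast?_eq_some_getLast hL, Option.map_some, hchain.rel_getLast_head_of_append hL hM]
  · rw [List.head?_eq_some_head hM, Option.map_some]
  · rwa [List.getLast?_append_of_ne_nil _ hM] at hlast

theorem exists_cons_perm_of_mem (h : IsDiwalk E x x L) {d : V × V} (hd : d ∈ L) :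
    ∃ R, (d :: R).Perm L ∧ IsDiwalk E d.1 d.1 (d :: R) := by
  obtain ⟨L₁, L₂, rfl⟩ := List.append_of_mem hd
  rcases eq_or_ne L₁ [] with rfl | hL₁
  · obtain rfl : d.1 = x := by simpa using h.2.2.2.1
    exact ⟨L₂, List.Perm.refl _, h⟩
  · obtain ⟨y, h₁, h₂⟩ := h.of_append hL₁ (List.cons_ne_nil d L₂)
    obtain rfl : d.1 = y := by simpa using h₂.2.2.2.1
    exact ⟨L₂ ++ L₁, List.perm_append_comm (l₁ := d :: L₂), h₂.append h₁⟩

theorem exists_fst_eq_snd_of_mem (h : IsDiwalk E x x L) {d : V × V} (hd : d ∈ L) :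
    ∃ d' ∈ L, d'.1 = d.2 := by
  obtain ⟨R, hperm, hR⟩ := h.exists_cons_perm_of_mem hd
  cases R with
  | nil => exact ⟨d, hd, by simpa [eq_comm] using hR.2.2.2.2⟩
  | cons f R => exact ⟨f, hperm.subset (by simp), (List.isChain_cons_cons.mp hR.2.2.1).1.symm⟩

end IsDiwalk

theorem UndirConnected.exists_incident_of_ne {V : Type*} {E : Multiset (V × V)}
    (hconn : UndirConnected E) {b e : V} (hbe : b ≠ e) : ∃ c, (b, c) ∈ E ∨ (c, b) ∈ E := by
  rcases (hconn b e hbe).cases_head with rfl | ⟨c, hc, -⟩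
  exacts [absurd rfl hbe, ⟨c, hc⟩]

theorem CircuitEulerian.exists_eulerian_dicircuit_at {V : Type*} {E : Multiset (V × V)}
    (hE : CircuitEulerian E) {b c : V} (hbc : (b, c) ∈ E ∨ (c, b) ∈ E) :
    ∃ L, IsDiwalk E b b L ∧ (L : Multiset (V × V)) = E := by
  obtain ⟨v, L, hL, rfl⟩ := hE
  obtain ⟨d, hd, rfl⟩ : ∃ d ∈ L, d.1 = b := by
    rcases hbc with hbc | hcb
    exacts [⟨_, hbc, rfl⟩, hL.exists_fst_eq_snd_of_mem hcb]
  obtain ⟨R, hperm, hR⟩ := hL.exists_cons_perm_of_mem hd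
  exact ⟨d :: R, hR, Multiset.coe_eq_coe.mpr hperm⟩

theorem circuitEulerian_add_dipath_pathEulerian_general
    {V : Type*} (E : Multiset (V × V))
    (hconn : UndirConnected E) (hE : CircuitEulerian E)
    (b e : V) (hbe : b ≠ e)
    (P : List (V × V))
    (hwalk : IsDiwalk (E + (P : Multiset (V × V))) b e P) :
    PathEulerian (E + (P : Multiset (V × V))) := by
  obtain ⟨c, hbc⟩ := hconn.exists_incident_of_ne hbe
  obtain ⟨L, hL, hLE⟩ := hE.exists_eulerian_dicircuit_at hbc
  refine ⟨b, e, hbe, L ++ P, (hL.mono Multiset.subset_add_left).append hwalk, ?_⟩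
  rw [← Multiset.coe_add, hLE]

/-- **Proposition 10.** Adjoining to a connected circuit-Eulerian multidigraph a
dipath of `k ≥ 1` distinct new diedges from `b` to `e` (with `b ≠ e`) yields a
path-Eulerian multidigraph. -/
theorem circuitEulerian_add_dipath_pathEulerian
    {V : Type*} [Fintype V] [DecidableEq V] (E : Multiset (V × V))
    (hconn : UndirConnected E) (hE : CircuitEulerian E)
    (b e : V) (hbe : b ≠ e) (k : ℕ) (hk : 1 ≤ k)
    (P : List (V × V)) (hlen : P.length = k) (hnodup : P.Nodup)
    (hwalk : IsDiwalk (E + (P : Multiset (V × V))) b e P)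
    (hnew : ∀ p ∈ P, E.count p = 0) :
    PathEulerian (E + (P : Multiset (V × V))) :=
  circuitEulerian_add_dipath_pathEulerian_general E hconn hE b e hbe P hwalk
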